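/- arXiv:2602.08805 — 3 statements merged into one kernel-verified Lean document; each statement's English description precedes it below -/
import Mathlib

section
/- Let n ≥ 1, p ∈ ℂⁿ, and 0 < r < R, and let B_r and B_R denote the closed polydiscs centered at p of polyradius r and R respectively. Let k ≥ 2 and let V₁,…,V_k be holomorphic vector fields on an open neighborhood of B_R. Then the nested commutator satisfies ‖[V₁,[V₂,…,[V_{k−1},V_k]…]]‖_{B_r} ≤ (2n(k−1)/(R−r))^{k−1} · Π_{i=1}^{k} ‖V_i‖_{B_R}. -/
/-- The Lie bracket of holomorphic vector fields `V, W : Ω → ℂⁿ`,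
`[V,W](z) = DW(z)(V(z)) − DV(z)(W(z))`. -/
noncomputable def lieB {n : ℕ} (V W : (Fin n → ℂ) → (Fin n → ℂ)) :
    (Fin n → ℂ) → (Fin n → ℂ) :=
  fun z => fderiv ℂ W z (V z) - fderiv ℂ V z (W z)

/-- Nested Lie bracket `[L₁,[L₂,…,[L_m, X]…]]` of a list of vector fields with base `X`. -/
noncomputable def nestedBracket {n : ℕ} (L : List ((Fin n → ℂ) → (Fin n → ℂ)))
    (X : (Fin n → ℂ) → (Fin n → ℂ)) : (Fin n → ℂ) → (Fin n → ℂ) :=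
  L.foldr lieB X

/-- The closed polydisc of polyradius `r` centered at `p`. -/
def polyDisc {n : ℕ} (p : Fin n → ℂ) (r : ℝ) : Set (Fin n → ℂ) :=
  {z | ∀ j, ‖z j - p j‖ ≤ r}

/-- `‖V‖_K = max_j sup_{z ∈ K} |V^j(z)|` (the sup over `K` of the sup-norm of `V`). -/
noncomputable def vfNorm {n : ℕ} (V : (Fin n → ℂ) → (Fin n → ℂ))
    (K : Set (Fin n → ℂ)) : ℝ :=
  ⨆ z ∈ K, ‖V z‖

/-!
Cauchy's estimate on a ball of radius `δ` bounds `‖DV‖` by `‖V‖ / δ`, so a bracket `[W, B]`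
on `B_ρ` is bounded by `2 / δ · ‖W‖ · ‖B‖` on `B_{ρ+δ}`. Peeling off the `k - 1` brackets one at a
time with `δ = (R - r) / (k - 1)` gives the constant `(2 (k - 1) / (R - r))^(k - 1)`, which is at most
the claimed one. For the induction the brackets must stay holomorphic: a directional derivative
`z ↦ DV(z) u` is locally a Cauchy integral over a complex line, holomorphic in `z` by
differentiation under the integral sign. On `Fin n → ℂ` (sup norm) polydiscs are metric balls.
-/

open Metric Set Complex Real

section Line

variable {E F : Type*} [NormedAddCommGroup E] [NormedSpace ℂ E]
  [NormedAddCommGroup F] [NormedSpace ℂ F] {f : E → F} {z u : E} {ρ δ M : ℝ}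

lemma mapsTo_add_smul_closedBall (z u : E) (ρ : ℝ) :
    MapsTo (fun ζ : ℂ => z + ζ • u) (closedBall 0 ρ) (closedBall z (ρ * ‖u‖)) := by
  intro ζ hζ
  rw [mem_closedBall_zero_iff] at hζ
  rw [mem_closedBall, dist_eq_norm, add_sub_cancel_left, norm_smul]
  gcongr

lemma DifferentiableOn.comp_add_smul (hf : DifferentiableOn ℂ f (closedBall z (ρ * ‖u‖))) :
    DifferentiableOn ℂ (fun ζ : ℂ => f (z + ζ • u)) (closedBall 0 ρ) :=
  hf.comp (by fun_prop : Differentiable ℂ fun ζ : ℂ => z + ζ • u).differentiableOn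
    (mapsTo_add_smul_closedBall z u ρ)

lemma DifferentiableAt.hasDerivAt_comp_add_smul (hf : DifferentiableAt ℂ f z) (u : E) :
    HasDerivAt (fun ζ : ℂ => f (z + ζ • u)) (fderiv ℂ f z u) 0 := by
  have hline : HasDerivAt (fun ζ : ℂ => z + ζ • u) u 0 := by
    simpa using ((hasDerivAt_id (0 : ℂ)).smul_const u).const_add z
  have hf' : HasFDerivAt f (fderiv ℂ f z) (z + (0 : ℂ) • u) := by simpa using hf.hasFDerivAt
  simpa [Function.comp_def] using hf'.comp_hasDerivAt 0 hline

/-- Cauchy's estimate, applied on each complex line through `z`. -/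
lemma norm_fderiv_le_of_forall_norm_le (hδ : 0 < δ)
    (hf : DifferentiableOn ℂ f (closedBall z δ)) (hM : ∀ w ∈ closedBall z δ, ‖f w‖ ≤ M) :
    ‖fderiv ℂ f z‖ ≤ M / δ := by
  have hM₀ : 0 ≤ M := (norm_nonneg _).trans (hM z (mem_closedBall_self hδ.le))
  refine ContinuousLinearMap.opNorm_le_bound _ (by positivity) fun u => ?_
  rcases eq_or_ne u 0 with rfl | hu
  · simp
  have hu₀ : 0 < ‖u‖ := norm_pos_iff.2 hu
  set ρ := δ / ‖u‖
  have hρ : 0 < ρ := by positivity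
  have hρu : ρ * ‖u‖ = δ := div_mul_cancel₀ _ hu₀.ne'
  have hline := (hρu ▸ hf).comp_add_smul (ρ := ρ) (u := u)
  have hderiv := (hf.differentiableAt (closedBall_mem_nhds z hδ)).hasDerivAt_comp_add_smul u
  have := norm_deriv_le_of_forall_mem_sphere_norm_le hρ (hline.diffContOnCl_ball subset_rfl)
    fun ζ hζ => hM _ (hρu ▸ mapsTo_add_smul_closedBall z u ρ (sphere_subset_closedBall hζ))
  rw [hderiv.deriv] at this
  calc ‖fderiv ℂ f z u‖ ≤ M / ρ := this
    _ = M / δ * ‖u‖ := by rw [← hρu]; field_simp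

lemma fderiv_apply_eq_circleIntegral [CompleteSpace F] (hρ : 0 < ρ) (hu : u ≠ 0)
    (hf : DifferentiableOn ℂ f (closedBall z (ρ * ‖u‖))) :
    fderiv ℂ f z u = (2 * π * I)⁻¹ • ∮ ζ in C(0, ρ), (1 / ζ ^ 2) • f (z + ζ • u) := by
  have hz : DifferentiableAt ℂ f z :=
    hf.differentiableAt (closedBall_mem_nhds z (by positivity [norm_pos_iff.2 hu]))
  have h := hf.comp_add_smul.deriv_eq_smul_circleIntegral hρ
  rw [(hz.hasDerivAt_comp_add_smul u).deriv] at h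
  simp only [sub_zero] at h
  rw [h, smul_smul, inv_mul_cancel₀ (by simp [pi_ne_zero, I_ne_zero]), one_smul]

end Line

section Parametric

variable {E F : Type*} [NormedAddCommGroup E] [NormedSpace ℂ E] [FiniteDimensional ℂ E]
  [NormedAddCommGroup F] [NormedSpace ℂ F] [FiniteDimensional ℂ F] {f : E → F}

/-- The domination needed to differentiate under the integral sign comes from Cauchy's estimate. -/
lemma differentiableAt_intervalIntegral_smul_comp_add {z : E} {r δ M : ℝ} {c : ℝ → ℂ}
    {γ : ℝ → E} (hc : Continuous c) (hγ : Continuous γ) (hγr : ∀ θ, ‖γ θ‖ ≤ r) (hδ : 0 < δ)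
    (hf : DifferentiableOn ℂ f (closedBall z (r + 2 * δ)))
    (hM : ∀ w ∈ closedBall z (r + 2 * δ), ‖f w‖ ≤ M) (a b : ℝ) :
    DifferentiableAt ℂ (fun x => ∫ θ in a..b, c θ • f (x + γ θ)) z := by
  borelize E
  have hnear : ∀ x ∈ ball z δ, ∀ θ, closedBall (x + γ θ) δ ⊆ closedBall z (r + 2 * δ) := by
    intro x hx θ
    refine closedBall_subset_closedBall' ?_
    calc δ + dist (x + γ θ) z = δ + ‖(x - z) + γ θ‖ := by rw [dist_eq_norm, add_sub_right_comm]
      _ ≤ δ + (dist x z + ‖γ θ‖) := by rw [dist_eq_norm]; gcongr; exact norm_add_le _ _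
      _ ≤ r + 2 * δ := by linarith [hγr θ, mem_ball.1 hx]
  have hdiffAt : ∀ x ∈ ball z δ, ∀ θ, DifferentiableAt ℂ f (x + γ θ) := fun x hx θ =>
    (hf.mono (hnear x hx θ)).differentiableAt (closedBall_mem_nhds _ hδ)
  have hbound : ∀ x ∈ ball z δ, ∀ θ, ‖fderiv ℂ f (x + γ θ)‖ ≤ M / δ := fun x hx θ =>
    norm_fderiv_le_of_forall_norm_le hδ (hf.mono (hnear x hx θ))
      fun w hw => hM w (hnear x hx θ hw)
  have hcont : ∀ x ∈ ball z δ, Continuous fun θ => c θ • f (x + γ θ) := fun x hx =>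
    hc.smul <| continuous_iff_continuousAt.2 fun θ =>
      (hdiffAt x hx θ).continuousAt.comp (f := fun θ => x + γ θ) (by fun_prop)
  refine (intervalIntegral.hasFDerivAt_integral_of_dominated_of_fderiv_le
    (F' := fun x θ => c θ • fderiv ℂ f (x + γ θ)) (bound := fun θ => ‖c θ‖ * (M / δ))
    (ball_mem_nhds z hδ) ?_ ?_ ?_ ?_ ?_ ?_).differentiableAt
  · filter_upwards [ball_mem_nhds z hδ] with x hx
    exact (hcont x hx).aestronglyMeasurable
  · exact (hcont z (mem_ball_self hδ)).intervalIntegrable a b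
  · exact hc.aestronglyMeasurable.smul
      ((measurable_fderiv ℂ f).comp (continuous_const.add hγ).measurable).aestronglyMeasurable
  · refine MeasureTheory.ae_of_all _ fun θ _ x hx => ?_
    rw [norm_smul]
    gcongr
    exact hbound x hx θ
  · exact (hc.norm.mul continuous_const).intervalIntegrable a b
  · refine MeasureTheory.ae_of_all _ fun θ _ x hx => ?_
    simpa [Function.comp_def] using ((hdiffAt x hx θ).hasFDerivAt.comp x
      ((hasFDerivAt_id x).add_const (γ θ))).fun_const_smul (c θ)

theorem differentiableOn_fderiv_apply {Ω : Set E} (hΩ : IsOpen Ω) (hf : DifferentiableOn ℂ f Ω)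
    (u : E) : DifferentiableOn ℂ (fun z => fderiv ℂ f z u) Ω := by
  rcases eq_or_ne u 0 with rfl | hu
  · simp [differentiableOn_const]
  intro z₀ hz₀
  obtain ⟨ε, hε, hball⟩ := nhds_basis_closedBall.mem_iff.1 (hΩ.mem_nhds hz₀)
  set δ := ε / 3
  have hδ : 0 < δ := by positivity
  have hsub : closedBall z₀ (δ + 2 * δ) ⊆ Ω := by
    convert hball using 2; ring
  obtain ⟨M, hM⟩ := (isCompact_closedBall z₀ (δ + 2 * δ)).exists_bound_of_continuousOn
    (hf.continuousOn.mono hsub)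
  have hu₀ : 0 < ‖u‖ := norm_pos_iff.2 hu
  set ρ := δ / ‖u‖
  have hρ : 0 < ρ := by positivity
  have hρu : ρ * ‖u‖ = δ := div_mul_cancel₀ _ hu₀.ne'
  set c : ℝ → ℂ := fun θ => deriv (circleMap 0 ρ) θ * (1 / circleMap 0 ρ θ ^ 2)
  have hc : Continuous c := by
    simp only [c, deriv_circleMap, one_div]
    exact (by fun_prop : Continuous _).mul
      (((continuous_circleMap 0 ρ).pow 2).inv₀ fun θ => pow_ne_zero 2 (circleMap_ne_center hρ.ne'))
  have hγr : ∀ θ, ‖circleMap 0 ρ θ • u‖ ≤ δ := fun θ => by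
    rw [norm_smul, norm_circleMap_zero, abs_of_pos hρ, hρu]
  have hcauchy : ∀ z ∈ ball z₀ δ, fderiv ℂ f z u =
      (2 * π * I)⁻¹ • ∫ θ in 0..2 * π, c θ • f (z + circleMap 0 ρ θ • u) := by
    intro z hz
    have hzsub : closedBall z (ρ * ‖u‖) ⊆ Ω := Subset.trans
      (closedBall_subset_closedBall' (by linarith [mem_ball.1 hz])) hsub
    rw [fderiv_apply_eq_circleIntegral hρ hu (hf.mono hzsub), circleIntegral]
    simp only [c, smul_smul]
  have hdiff := differentiableAt_intervalIntegral_smul_comp_add hc (by fun_prop) hγr hδ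
    (hf.mono hsub) hM 0 (2 * π)
  exact ((hdiff.const_smul (2 * π * I)⁻¹).congr_of_eventuallyEq
    (Filter.eventually_of_mem (ball_mem_nhds z₀ hδ) hcauchy)).differentiableWithinAt

end Parametric

section VectorFields

variable {n : ℕ} {Ω K K' : Set (Fin n → ℂ)} {V W X : (Fin n → ℂ) → (Fin n → ℂ)}

lemma differentiableOn_fderiv_apply_comp (hΩ : IsOpen Ω) (hV : DifferentiableOn ℂ V Ω)
    (hW : DifferentiableOn ℂ W Ω) : DifferentiableOn ℂ (fun z => fderiv ℂ W z (V z)) Ω := by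
  have hsum : (fun z => fderiv ℂ W z (V z)) =
      fun z => ∑ j, V z j • fderiv ℂ W z (fun i => if j = i then 1 else 0) :=
    funext fun z => (fderiv ℂ W z).toLinearMap.pi_apply_eq_sum_univ (V z)
  rw [hsum]
  exact DifferentiableOn.fun_sum fun j _ =>
    (differentiableOn_pi.1 hV j).smul (differentiableOn_fderiv_apply hΩ hW _)

lemma differentiableOn_lieB (hΩ : IsOpen Ω) (hV : DifferentiableOn ℂ V Ω)
    (hW : DifferentiableOn ℂ W Ω) : DifferentiableOn ℂ (lieB V W) Ω :=
  (differentiableOn_fderiv_apply_comp hΩ hV hW).sub (differentiableOn_fderiv_apply_comp hΩ hW hV)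

lemma differentiableOn_nestedBracket (hΩ : IsOpen Ω) {L : List ((Fin n → ℂ) → (Fin n → ℂ))}
    (hL : ∀ W ∈ L, DifferentiableOn ℂ W Ω) (hX : DifferentiableOn ℂ X Ω) :
    DifferentiableOn ℂ (nestedBracket L X) Ω := by
  induction L with
  | nil => exact hX
  | cons W L ih =>
    exact differentiableOn_lieB hΩ (hL W List.mem_cons_self)
      (ih fun A hA => hL A (List.mem_cons_of_mem _ hA))

lemma vfNorm_nonneg (V : (Fin n → ℂ) → (Fin n → ℂ)) (K : Set (Fin n → ℂ)) : 0 ≤ vfNorm V K :=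
  Real.iSup_nonneg fun _ => Real.iSup_nonneg fun _ => norm_nonneg _

lemma vfNorm_le {C : ℝ} (hC : 0 ≤ C) (h : ∀ z ∈ K, ‖V z‖ ≤ C) : vfNorm V K ≤ C :=
  Real.iSup_le (fun z => Real.iSup_le (h z) hC) hC

lemma norm_le_vfNorm (hK : IsCompact K) (hV : ContinuousOn V K) {z : Fin n → ℂ} (hz : z ∈ K) :
    ‖V z‖ ≤ vfNorm V K := by
  obtain ⟨C, hC⟩ := hK.exists_bound_of_continuousOn hV
  have hbdd : BddAbove (range fun w => ⨆ _ : w ∈ K, ‖V w‖) :=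
    ⟨max C 0, forall_mem_range.2 fun w =>
      Real.iSup_le (fun hw => (hC w hw).trans (le_max_left _ _)) (le_max_right _ _)⟩
  exact (le_ciSup (f := fun _ : z ∈ K => ‖V z‖) (Set.finite_range _).bddAbove hz).trans
    (le_ciSup hbdd z)

lemma vfNorm_mono (hK' : IsCompact K') (hV : ContinuousOn V K') (hKK' : K ⊆ K') :
    vfNorm V K ≤ vfNorm V K' :=
  vfNorm_le (vfNorm_nonneg V K') fun _ hz => norm_le_vfNorm hK' hV (hKK' hz)

lemma norm_lieB_le {z : Fin n → ℂ} {δ a b : ℝ} (hδ : 0 < δ)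
    (hV : DifferentiableOn ℂ V (closedBall z δ)) (hW : DifferentiableOn ℂ W (closedBall z δ))
    (ha : ∀ w ∈ closedBall z δ, ‖V w‖ ≤ a) (hb : ∀ w ∈ closedBall z δ, ‖W w‖ ≤ b) :
    ‖lieB V W z‖ ≤ 2 / δ * (a * b) := by
  have hz : z ∈ closedBall z δ := mem_closedBall_self hδ.le
  have hdV := norm_fderiv_le_of_forall_norm_le hδ hV ha
  have hdW := norm_fderiv_le_of_forall_norm_le hδ hW hb
  calc ‖lieB V W z‖ ≤ ‖fderiv ℂ W z‖ * ‖V z‖ + ‖fderiv ℂ V z‖ * ‖W z‖ :=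
        (norm_sub_le _ _).trans (add_le_add (ContinuousLinearMap.le_opNorm _ _)
          (ContinuousLinearMap.le_opNorm _ _))
    _ ≤ b / δ * a + a / δ * b :=
        add_le_add (mul_le_mul hdW (ha z hz) (norm_nonneg _) ((norm_nonneg _).trans hdW))
          (mul_le_mul hdV (hb z hz) (norm_nonneg _) ((norm_nonneg _).trans hdV))
    _ = 2 / δ * (a * b) := by ring

lemma vfNorm_lieB_le {p : Fin n → ℂ} {ρ δ : ℝ} (hδ : 0 < δ)
    (hV : DifferentiableOn ℂ V (closedBall p (ρ + δ)))
    (hW : DifferentiableOn ℂ W (closedBall p (ρ + δ))) :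
    vfNorm (lieB V W) (closedBall p ρ) ≤
      2 / δ * (vfNorm V (closedBall p (ρ + δ)) * vfNorm W (closedBall p (ρ + δ))) := by
  have := vfNorm_nonneg V (closedBall p (ρ + δ))
  have := vfNorm_nonneg W (closedBall p (ρ + δ))
  refine vfNorm_le (by positivity) fun z hz => ?_
  have hsub : closedBall z δ ⊆ closedBall p (ρ + δ) :=
    closedBall_subset_closedBall' (by linarith [mem_closedBall.1 hz])
  exact norm_lieB_le hδ (hV.mono hsub) (hW.mono hsub)
    (fun w hw => norm_le_vfNorm (isCompact_closedBall _ _) hV.continuousOn (hsub hw))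
    (fun w hw => norm_le_vfNorm (isCompact_closedBall _ _) hW.continuousOn (hsub hw))

end VectorFields

lemma vfNorm_nestedBracket_le {n : ℕ} {Ω : Set (Fin n → ℂ)} (hΩ : IsOpen Ω) {p : Fin n → ℂ}
    {R δ : ℝ} (hδ : 0 < δ) (hsub : closedBall p R ⊆ Ω) {X : (Fin n → ℂ) → (Fin n → ℂ)}
    (hX : DifferentiableOn ℂ X Ω) (L : List ((Fin n → ℂ) → (Fin n → ℂ)))
    (hL : ∀ W ∈ L, DifferentiableOn ℂ W Ω) {ρ : ℝ} (hρ : ρ + L.length * δ ≤ R) :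
    vfNorm (nestedBracket L X) (closedBall p ρ) ≤
      (2 / δ) ^ L.length *
        ((L.map (vfNorm · (closedBall p R))).prod * vfNorm X (closedBall p R)) := by
  induction L generalizing ρ with
  | nil =>
    simp only [List.length_nil, CharP.cast_eq_zero, zero_mul, add_zero] at hρ
    simp only [List.length_nil, pow_zero, List.map_nil, List.prod_nil, one_mul]
    exact vfNorm_mono (isCompact_closedBall p R) (hX.continuousOn.mono hsub)
      (closedBall_subset_closedBall hρ)
  | cons W L ih =>
    simp only [List.length_cons, Nat.cast_succ] at hρ
    have hL' : ∀ A ∈ L, DifferentiableOn ℂ A Ω := fun A hA => hL A (List.mem_cons_of_mem _ hA)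
    have hW : DifferentiableOn ℂ W Ω := hL W List.mem_cons_self
    have hρδ : ρ + δ ≤ R := by nlinarith [L.length.cast_nonneg (α := ℝ)]
    have hball : closedBall p (ρ + δ) ⊆ Ω := (closedBall_subset_closedBall hρδ).trans hsub
    have hB := (differentiableOn_nestedBracket hΩ hL' hX).mono hball
    have hWR : vfNorm W (closedBall p (ρ + δ)) ≤ vfNorm W (closedBall p R) :=
      vfNorm_mono (isCompact_closedBall p R) (hW.continuousOn.mono hsub)
        (closedBall_subset_closedBall hρδ)
    have hBR := ih hL' (ρ := ρ + δ) (by linarith)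
    calc vfNorm (nestedBracket (W :: L) X) (closedBall p ρ)
        ≤ 2 / δ * (vfNorm W (closedBall p (ρ + δ)) *
            vfNorm (nestedBracket L X) (closedBall p (ρ + δ))) :=
          vfNorm_lieB_le hδ (hW.mono hball) hB
      _ ≤ 2 / δ * (vfNorm W (closedBall p R) * ((2 / δ) ^ L.length *
            ((L.map (vfNorm · (closedBall p R))).prod * vfNorm X (closedBall p R)))) := by
          gcongr 2 / δ * ?_
          exact mul_le_mul hWR hBR (vfNorm_nonneg _ _) (vfNorm_nonneg _ _)
      _ = _ := by
          simp only [List.map_cons, List.prod_cons, List.length_cons, pow_succ]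
          ring

lemma polyDisc_eq_closedBall {n : ℕ} (p : Fin n → ℂ) {r : ℝ} (hr : 0 ≤ r) :
    polyDisc p r = closedBall p r := by
  ext z
  simp only [polyDisc, mem_ofPred_eq, mem_closedBall, dist_eq_norm, pi_norm_le_iff_of_nonneg hr,
    Pi.sub_apply]

/-- Nested commutator estimate: for `k ≥ 2` holomorphic vector fields `V₁,…,V_k` on a
neighborhood of `B_R(p)` and `0 < r < R`,
`‖[V₁,[V₂,…,[V_{k−1},V_k]…]]‖_{B_r} ≤ (2n(k−1)/(R−r))^{k−1} Π ‖V_i‖_{B_R}`. -/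
theorem stmt_2 (n : ℕ) (hn : 1 ≤ n) (p : Fin n → ℂ) (r R : ℝ) (hr : 0 < r) (hrR : r < R)
    (k : ℕ) (hk : 2 ≤ k) (Ω : Set (Fin n → ℂ)) (hΩ : IsOpen Ω) (hsub : polyDisc p R ⊆ Ω)
    (V : Fin k → (Fin n → ℂ) → (Fin n → ℂ)) (hV : ∀ i, DifferentiableOn ℂ (V i) Ω) :
    vfNorm (nestedBracket (List.ofFn fun j : Fin (k - 1) => V (Fin.castLE (Nat.sub_le k 1) j))
        (V ⟨k - 1, by omega⟩)) (polyDisc p r)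
      ≤ (2 * n * ((k : ℝ) - 1) / (R - r)) ^ (k - 1) * ∏ i, vfNorm (V i) (polyDisc p R) := by
  obtain ⟨m, rfl⟩ : ∃ m, k = m + 1 := ⟨k - 1, by omega⟩
  have hm : (0 : ℝ) < m := by exact_mod_cast (by omega : 0 < m)
  have hδ : 0 < (R - r) / m := div_pos (by linarith) hm
  rw [polyDisc_eq_closedBall p hr.le]
  rw [polyDisc_eq_closedBall p (by linarith)] at hsub ⊢
  set L := List.ofFn fun j : Fin (m + 1 - 1) => V (Fin.castLE (Nat.sub_le (m + 1) 1) j)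
  have hlen : L.length = m := List.length_ofFn
  have key := vfNorm_nestedBracket_le hΩ hδ hsub (hV (Fin.last m)) L
    (by simpa [L, List.mem_ofFn] using fun j => hV _) (ρ := r)
    (by rw [hlen, mul_div_cancel₀ _ hm.ne']; linarith)
  have hprod : ∏ i, vfNorm (V i) (closedBall p R) =
      (L.map (vfNorm · (closedBall p R))).prod * vfNorm (V (Fin.last m)) (closedBall p R) := by
    rw [List.map_ofFn, List.prod_ofFn, Fin.prod_univ_castSucc]
    rfl
  have hcoef : 2 / ((R - r) / m) ≤ 2 * n * ((↑(m + 1) : ℝ) - 1) / (R - r) := by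
    rw [div_div_eq_mul_div, Nat.cast_succ, add_sub_cancel_right]
    gcongr
    linarith [show (1 : ℝ) ≤ n by exact_mod_cast hn]
  refine key.trans ?_
  rw [hlen, hprod, Nat.add_sub_cancel]
  have hnorms : 0 ≤
      (L.map (vfNorm · (closedBall p R))).prod * vfNorm (V (Fin.last m)) (closedBall p R) :=
    mul_nonneg (List.prod_nonneg (by simp [vfNorm_nonneg])) (vfNorm_nonneg _ _)
  exact mul_le_mul_of_nonneg_right (pow_le_pow_left₀ (by positivity) hcoef m) hnorms
end

section
/- Let G = Σ_{m≥0} g_m u^m be a formal power series over ℝ with g_m ≥ 0 for all m, and let f = Σ_{k≥1} f_k ξ^k be the unique formal power series with zero constant coefficient satisfying f′ = G(f). Let C = Σ_{k≥1} c_k ξ^k be a formal power series with zero constant coefficient and c_k ≥ 0 for all k, and assume the coefficientwise inequality: for every N ≥ 0, the coefficient of ξ^N in C′ is at most the coefficient of ξ^N in G(C). Then c_k ≤ f_k for all k ≥ 1. -/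
/-!
Since `coeff N (G(C))` involves only `c_0, …, c_N`, and does so monotonically on nonnegative
coefficients when `G ≥ 0`, the inequality `C′ ≤ G(C)` bounds `(N + 1) c_{N+1}` by
`coeff N (G(C)) ≤ coeff N (G(f)) = (N + 1) f_{N+1}` once `c_j ≤ f_j` is known for `j ≤ N`.
Induction on `N` then compares `C` with `f` coefficient by coefficient.
-/

/-- Formal substitution `G(C) = Σ_m g_m C^m` of a power series `C` with zero constant
coefficient into `G`, defined coefficientwise. -/
noncomputable def pComp (G f : PowerSeries ℝ) : PowerSeries ℝ :=
  PowerSeries.mk fun N =>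
    ∑ m ∈ Finset.range (N + 1), (PowerSeries.coeff m G) * (PowerSeries.coeff N (f ^ m))

/-- The formal derivative of a power series. -/
noncomputable def pDeriv (f : PowerSeries ℝ) : PowerSeries ℝ :=
  PowerSeries.mk fun N => ((N : ℝ) + 1) * PowerSeries.coeff (N + 1) f

open PowerSeries Finset Finset.HasAntidiagonal

section OrderedCoefficients

variable {R : Type*} [CommSemiring R] [PartialOrder R] [IsOrderedRing R] {N : ℕ}

theorem coeff_mul_nonneg_of_forall_le {φ ψ : R⟦X⟧} (hφ : ∀ j ≤ N, 0 ≤ coeff j φ)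
    (hψ : ∀ j ≤ N, 0 ≤ coeff j ψ) : 0 ≤ coeff N (φ * ψ) := by
  rw [coeff_mul]
  exact sum_nonneg fun p hp =>
    mul_nonneg (hφ _ (antidiagonal.fst_le hp)) (hψ _ (antidiagonal.snd_le hp))

theorem coeff_mul_le_coeff_mul_of_forall_le {φ₁ φ₂ ψ₁ ψ₂ : R⟦X⟧}
    (h₁ : ∀ j ≤ N, coeff j φ₁ ≤ coeff j ψ₁) (h₂ : ∀ j ≤ N, coeff j φ₂ ≤ coeff j ψ₂)
    (hφ₂ : ∀ j ≤ N, 0 ≤ coeff j φ₂) (hψ₁ : ∀ j ≤ N, 0 ≤ coeff j ψ₁) :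
    coeff N (φ₁ * φ₂) ≤ coeff N (ψ₁ * ψ₂) := by
  rw [coeff_mul, coeff_mul]
  refine sum_le_sum fun p hp => ?_
  have hp₁ := antidiagonal.fst_le hp
  have hp₂ := antidiagonal.snd_le hp
  exact mul_le_mul (h₁ _ hp₁) (h₂ _ hp₂) (hφ₂ _ hp₂) (hψ₁ _ hp₁)

theorem coeff_pow_nonneg_of_forall_le {φ : R⟦X⟧} (hφ : ∀ j ≤ N, 0 ≤ coeff j φ) (m : ℕ) :
    ∀ j ≤ N, 0 ≤ coeff j (φ ^ m) := by
  induction m with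
  | zero =>
    intro j _
    rw [pow_zero, coeff_one]
    split_ifs <;> simp
  | succ m ih =>
    intro j hj
    rw [pow_succ]
    exact coeff_mul_nonneg_of_forall_le (fun i hi => ih i (hi.trans hj))
      (fun i hi => hφ i (hi.trans hj))

theorem coeff_pow_le_coeff_pow_of_forall_le {φ ψ : R⟦X⟧} (hφ : ∀ j ≤ N, 0 ≤ coeff j φ)
    (hφψ : ∀ j ≤ N, coeff j φ ≤ coeff j ψ) (m : ℕ) :
    ∀ j ≤ N, coeff j (φ ^ m) ≤ coeff j (ψ ^ m) := by
  have hψ : ∀ j ≤ N, 0 ≤ coeff j ψ := fun j hj => (hφ j hj).trans (hφψ j hj)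
  induction m with
  | zero => exact fun _ _ => le_rfl
  | succ m ih =>
    intro j hj
    rw [pow_succ, pow_succ]
    exact coeff_mul_le_coeff_mul_of_forall_le (fun i hi => ih i (hi.trans hj))
      (fun i hi => hφψ i (hi.trans hj)) (fun i hi => hφ i (hi.trans hj))
      (fun i hi => coeff_pow_nonneg_of_forall_le hψ m i (hi.trans hj))

end OrderedCoefficients

theorem coeff_pDeriv (φ : PowerSeries ℝ) (N : ℕ) :
    coeff N (pDeriv φ) = ((N : ℝ) + 1) * coeff (N + 1) φ := by
  simp [pDeriv]

theorem coeff_succ_le_of_coeff_pDeriv_le {φ ψ : PowerSeries ℝ} {N : ℕ}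
    (h : coeff N (pDeriv φ) ≤ coeff N (pDeriv ψ)) : coeff (N + 1) φ ≤ coeff (N + 1) ψ := by
  rw [coeff_pDeriv, coeff_pDeriv] at h
  exact le_of_mul_le_mul_left h N.cast_add_one_pos

theorem coeff_pComp_le_coeff_pComp {G φ ψ : PowerSeries ℝ} {N : ℕ}
    (hG : ∀ m, 0 ≤ coeff m G) (hφ : ∀ j ≤ N, 0 ≤ coeff j φ)
    (hφψ : ∀ j ≤ N, coeff j φ ≤ coeff j ψ) : coeff N (pComp G φ) ≤ coeff N (pComp G ψ) := by
  simp only [pComp, coeff_mk]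
  exact sum_le_sum fun m _ =>
    mul_le_mul_of_nonneg_left (coeff_pow_le_coeff_pow_of_forall_le hφ hφψ m N le_rfl) (hG m)

theorem coeff_le_coeff_of_pDeriv_le_pComp {G φ ψ : PowerSeries ℝ}
    (hG : ∀ m, 0 ≤ coeff m G) (hφ : ∀ k, 0 ≤ coeff k φ) (h₀ : coeff 0 φ ≤ coeff 0 ψ)
    (hsub : ∀ N, coeff N (pDeriv φ) ≤ coeff N (pComp G φ))
    (hsuper : ∀ N, coeff N (pComp G ψ) ≤ coeff N (pDeriv ψ)) (k : ℕ) :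
    coeff k φ ≤ coeff k ψ := by
  suffices ∀ N, ∀ j ≤ N, coeff j φ ≤ coeff j ψ from this k k le_rfl
  intro N
  induction N with
  | zero => exact fun j hj => Nat.le_zero.mp hj ▸ h₀
  | succ N ih =>
    intro j hj
    rcases Nat.of_le_succ hj with hj | rfl
    · exact ih j hj
    · exact coeff_succ_le_of_coeff_pDeriv_le <| (hsub N).trans <|
        (coeff_pComp_le_coeff_pComp hG (fun i _ => hφ i) ih).trans (hsuper N)

/-- Majorant comparison: if `G` has nonnegative coefficients, `f` is the formal solution
of `f′ = G(f)` with zero constant coefficient, and `C` has nonnegative coefficients, zero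
constant coefficient, and satisfies `coeff N C′ ≤ coeff N G(C)` for all `N`, then
`c_k ≤ f_k` for all `k ≥ 1`. -/
theorem stmt_9 (G f C : PowerSeries ℝ)
    (hG : ∀ m, 0 ≤ PowerSeries.coeff m G)
    (hf0 : PowerSeries.constantCoeff f = 0)
    (hfODE : pDeriv f = pComp G f)
    (hC0 : PowerSeries.constantCoeff C = 0)
    (hCnonneg : ∀ k, 0 ≤ PowerSeries.coeff k C)
    (hmaj : ∀ N, PowerSeries.coeff N (pDeriv C) ≤ PowerSeries.coeff N (pComp G C)) :
    ∀ k, 1 ≤ k → PowerSeries.coeff k C ≤ PowerSeries.coeff k f := by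
  have h₀ : coeff 0 C ≤ coeff 0 f := by simp [hC0, hf0]
  exact fun k _ => coeff_le_coeff_of_pDeriv_le_pComp hG hCnonneg h₀ hmaj
    (fun N => (congrArg (coeff N) hfODE).ge) k
end

section
/- Let L be a Lie ring and let x, a, b ∈ L. Then for all integers k, m ≥ 0: ⁅(ad x)^k a, (ad x)^m b⁆ = Σ_{l=0}^{k} (−1)^l · C(k,l) · (ad x)^{k−l} ⁅a, (ad x)^{m+l} b⁆, where ad x is the map y ↦ ⁅x,y⁆, (ad x)^k denotes its k-th iterate, and C(k,l) is the binomial coefficient. -/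
open LieAlgebra Finset in
lemma aux14 {L : Type*} [LieRing L] (x a b : L) (k : ℕ) : ∀ m : ℕ,
    ⁅((ad ℤ L x)^k) a, ((ad ℤ L x)^m) b⁆
      = ∑ l ∈ range (k + 1),
          ((-1 : ℤ) ^ l * (k.choose l : ℤ)) •
            ((ad ℤ L x)^(k - l)) ⁅a, ((ad ℤ L x)^(m + l)) b⁆ := by
  induction k with
  | zero => intro m; simp
  | succ k ih =>
    intro m
    set D := ad ℤ L x with hD
    have hDapp : ∀ y : L, D y = ⁅x, y⁆ := fun y => rfl
    have step : ⁅(D^(k+1)) a, (D^m) b⁆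
        = D ⁅(D^k) a, (D^m) b⁆ - ⁅(D^k) a, (D^(m+1)) b⁆ := by
      have h1 : (D^(k+1)) a = D ((D^k) a) := by rw [pow_succ']; rfl
      have h2 : (D^(m+1)) b = D ((D^m) b) := by rw [pow_succ']; rfl
      rw [h1, h2, hDapp, hDapp, hDapp, leibniz_lie]
      abel
    rw [step, ih m, ih (m+1), map_sum]
    have hS1 : ∀ l ∈ range (k+1),
        D (((-1:ℤ)^l * (k.choose l : ℤ)) • (D^(k-l)) ⁅a, (D^(m+l)) b⁆)
          = ((-1:ℤ)^l * (k.choose l : ℤ)) • (D^(k+1-l)) ⁅a, (D^(m+l)) b⁆ := by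
      intro l hl
      rw [map_smul]
      congr 1
      have : k + 1 - l = (k - l) + 1 := by
        have := Nat.lt_succ_iff.mp (mem_range.mp hl); omega
      rw [this, pow_succ']
      rfl
    rw [Finset.sum_congr rfl hS1]
    have hidx : ∀ l : ℕ, m + 1 + l = m + (l + 1) := fun l => by omega
    simp only [hidx]
    rw [Finset.sum_range_succ' (fun l => ((-1:ℤ)^l * (k.choose l : ℤ)) •
          (D^(k+1-l)) ⁅a, (D^(m+l)) b⁆) k,
        Finset.sum_range_succ (fun l => ((-1:ℤ)^l * (k.choose l : ℤ)) •
          (D^(k-l)) ⁅a, (D^(m+(l+1))) b⁆) k,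
        Finset.sum_range_succ' (fun l => ((-1:ℤ)^l * ((k+1).choose l : ℤ)) •
          (D^(k+1-l)) ⁅a, (D^(m+l)) b⁆) (k+1),
        Finset.sum_range_succ (fun l => ((-1:ℤ)^(l+1) * ((k+1).choose (l+1) : ℤ)) •
          (D^(k+1-(l+1))) ⁅a, (D^(m+(l+1))) b⁆) k]
    simp only [Nat.succ_sub_succ]
    have hmain : ∀ l ∈ range k,
        ((-1:ℤ)^(l+1) * (k.choose (l+1) : ℤ)) • (D^(k-l)) ⁅a, (D^(m+(l+1))) b⁆
          - ((-1:ℤ)^l * (k.choose l : ℤ)) • (D^(k-l)) ⁅a, (D^(m+(l+1))) b⁆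
          = ((-1:ℤ)^(l+1) * ((k+1).choose (l+1) : ℤ)) • (D^(k-l)) ⁅a, (D^(m+(l+1))) b⁆ := by
      intro l _
      rw [← sub_smul]
      congr 1
      rw [Nat.choose_succ_succ]
      push_cast
      ring
    have hsplit : ∑ l ∈ range k, ((-1:ℤ)^(l+1) * (k.choose (l+1) : ℤ)) •
            (D^(k-l)) ⁅a, (D^(m+(l+1))) b⁆
          - ∑ l ∈ range k, ((-1:ℤ)^l * (k.choose l : ℤ)) •
            (D^(k-l)) ⁅a, (D^(m+(l+1))) b⁆
        = ∑ l ∈ range k, ((-1:ℤ)^(l+1) * ((k+1).choose (l+1) : ℤ)) •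
            (D^(k-l)) ⁅a, (D^(m+(l+1))) b⁆ := by
      rw [← Finset.sum_sub_distrib]
      exact Finset.sum_congr rfl hmain
    have hlast : ((-1:ℤ)^(k+1) * ((k+1).choose (k+1) : ℤ)) •
            (D^(k-k)) ⁅a, (D^(m+(k+1))) b⁆
          = -(((-1:ℤ)^k * (k.choose k : ℤ)) • (D^(k-k)) ⁅a, (D^(m+(k+1))) b⁆) := by
      rw [← neg_smul]
      congr 1
      simp [pow_succ]
    rw [hlast]
    simp only [Nat.choose_zero_right, pow_zero, Nat.cast_one, one_mul, ← hsplit]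
    abel

/-- In a Lie ring, for all `k, m ≥ 0`:
`⁅(ad x)^k a, (ad x)^m b⁆ = Σ_{l=0}^{k} (−1)^l C(k,l) (ad x)^{k−l} ⁅a, (ad x)^{m+l} b⁆`. -/
theorem stmt_14 {L : Type*} [LieRing L] (x a b : L) (k m : ℕ) :
    ⁅(fun y => ⁅x, y⁆)^[k] a, (fun y => ⁅x, y⁆)^[m] b⁆
      = ∑ l ∈ Finset.range (k + 1),
          ((-1 : ℤ) ^ l * (k.choose l : ℤ)) •
            (fun y => ⁅x, y⁆)^[k - l] ⁅a, (fun y => ⁅x, y⁆)^[m + l] b⁆ := by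
  have hit : ∀ (n : ℕ) (y : L), (fun y => ⁅x, y⁆)^[n] y = ((LieAlgebra.ad ℤ L x)^n) y := by
    intro n y
    rw [Module.End.pow_apply]; rfl
  simp only [hit]
  exact aux14 x a b k m
end
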